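/- Let Y₁, Y₂, A₁, A₂, M₁, M₂ be discrete random variables with M₁, M₂ taking values in {0,1}. Suppose (i) Y₂ ⫫ (M₁, M₂) | (A₁, A₂, Y₁) and (ii) Y₁ ⫫ M₁ | A₁. Then the quantity θ(y₂, a₁, a₂) := Σ_{y₁} P(Y₂ = y₂ | A₁ = a₁, A₂ = a₂, Y₁ = y₁) · P(Y₁ = y₁ | A₁ = a₁) equals Σ_{y₁} P(Y₂ = y₂ | A₁ = a₁, A₂ = a₂, Y₁ = y₁, M₁ = 0, M₂ = 0) · P(Y₁ = y₁ | A₁ = a₁, M₁ = 0), whenever all conditioning events have positive probability. -/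

import Mathlib

/-!
If `C` is conditionally independent of `A` given `B`, then further conditioning on `C` does not
change the probability of `A`. Applied with `C = {M₁ = 0, M₂ = 0}` via (i) and `C = {M₁ = 0}`
via (ii), the two sums agree term by term.
-/

open MeasureTheory

/-- Conditional probability `P(A | B) = P(A ∩ B) / P(B)`. -/
noncomputable def pcond {Ω : Type*} [MeasurableSpace Ω] (μ : Measure Ω)
    (A B : Set Ω) : ENNReal := μ (A ∩ B) / μ B

open Set

theorem pcond_inter_eq_of_factorizes {Ω : Type*} [MeasurableSpace Ω] {μ : Measure Ω}
    [IsFiniteMeasure μ] {A B C : Set Ω} (hBC : 0 < μ (B ∩ C))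
    (h : pcond μ (A ∩ C) B = pcond μ A B * pcond μ C B) :
    pcond μ A (B ∩ C) = pcond μ A B := by
  have hB₀ : μ B ≠ 0 := (hBC.trans_le (measure_mono inter_subset_left)).ne'
  have hB_top := measure_ne_top μ B
  have hACB : μ (A ∩ C ∩ B) = μ (A ∩ B) * μ (C ∩ B) / μ B := by
    rw [pcond, pcond, pcond] at h
    rw [← ENNReal.div_mul_cancel hB₀ hB_top (b := μ (A ∩ C ∩ B)), h, mul_assoc,
      ENNReal.div_mul_cancel hB₀ hB_top, ← ENNReal.mul_div_right_comm]
  rw [pcond, pcond, ENNReal.div_eq_div_iff hB₀ hB_top hBC.ne' (measure_ne_top μ _),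
    show A ∩ (B ∩ C) = A ∩ C ∩ B by rw [inter_comm B, inter_assoc], hACB, inter_comm B C,
    ENNReal.mul_div_cancel hB₀ hB_top, mul_comm]

theorem sequential_factorization_recoverability_general
    {Ω 𝒴₁ 𝒴₂ 𝒜₁ 𝒜₂ : Type*} [MeasurableSpace Ω] [Fintype 𝒴₁]
    (μ : Measure Ω) [IsProbabilityMeasure μ]
    (Y₁ : Ω → 𝒴₁) (Y₂ : Ω → 𝒴₂) (A₁ : Ω → 𝒜₁) (A₂ : Ω → 𝒜₂) (M₁ M₂ : Ω → Fin 2)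
    -- (i) Y₂ ⫫ (M₁, M₂) | (A₁, A₂, Y₁)
    (hci₁ : ∀ (y₂ : 𝒴₂) (m₁ m₂ : Fin 2) (a₁ : 𝒜₁) (a₂ : 𝒜₂) (y₁ : 𝒴₁),
      0 < μ ({ω | A₁ ω = a₁} ∩ {ω | A₂ ω = a₂} ∩ {ω | Y₁ ω = y₁}) →
      pcond μ ({ω | Y₂ ω = y₂} ∩ {ω | M₁ ω = m₁} ∩ {ω | M₂ ω = m₂})
          ({ω | A₁ ω = a₁} ∩ {ω | A₂ ω = a₂} ∩ {ω | Y₁ ω = y₁})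
        = pcond μ {ω | Y₂ ω = y₂} ({ω | A₁ ω = a₁} ∩ {ω | A₂ ω = a₂} ∩ {ω | Y₁ ω = y₁})
          * pcond μ ({ω | M₁ ω = m₁} ∩ {ω | M₂ ω = m₂})
              ({ω | A₁ ω = a₁} ∩ {ω | A₂ ω = a₂} ∩ {ω | Y₁ ω = y₁}))
    -- (ii) Y₁ ⫫ M₁ | A₁
    (hci₂ : ∀ (y₁ : 𝒴₁) (m₁ : Fin 2) (a₁ : 𝒜₁), 0 < μ {ω | A₁ ω = a₁} →
      pcond μ ({ω | Y₁ ω = y₁} ∩ {ω | M₁ ω = m₁}) {ω | A₁ ω = a₁}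
        = pcond μ {ω | Y₁ ω = y₁} {ω | A₁ ω = a₁}
          * pcond μ {ω | M₁ ω = m₁} {ω | A₁ ω = a₁})
    (y₂ : 𝒴₂) (a₁ : 𝒜₁) (a₂ : 𝒜₂)
    -- positivity of all conditioning events
    (hpos₁ : ∀ y₁ : 𝒴₁,
      0 < μ ({ω | A₁ ω = a₁} ∩ {ω | A₂ ω = a₂} ∩ {ω | Y₁ ω = y₁}
        ∩ {ω | M₁ ω = 0} ∩ {ω | M₂ ω = 0}))
    (hpos₂ : 0 < μ ({ω | A₁ ω = a₁} ∩ {ω | M₁ ω = 0})) :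
    ∑ y₁ : 𝒴₁,
        pcond μ {ω | Y₂ ω = y₂} ({ω | A₁ ω = a₁} ∩ {ω | A₂ ω = a₂} ∩ {ω | Y₁ ω = y₁})
          * pcond μ {ω | Y₁ ω = y₁} {ω | A₁ ω = a₁}
      = ∑ y₁ : 𝒴₁,
        pcond μ {ω | Y₂ ω = y₂}
            ({ω | A₁ ω = a₁} ∩ {ω | A₂ ω = a₂} ∩ {ω | Y₁ ω = y₁}
              ∩ {ω | M₁ ω = 0} ∩ {ω | M₂ ω = 0})
          * pcond μ {ω | Y₁ ω = y₁} ({ω | A₁ ω = a₁} ∩ {ω | M₁ ω = 0}) := by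
  refine Finset.sum_congr rfl fun y₁ _ => ?_
  have hpos : 0 < μ ({ω | A₁ ω = a₁} ∩ {ω | A₂ ω = a₂} ∩ {ω | Y₁ ω = y₁}
      ∩ ({ω | M₁ ω = 0} ∩ {ω | M₂ ω = 0})) := by
    rw [← inter_assoc]; exact hpos₁ y₁
  have hY₂ := pcond_inter_eq_of_factorizes hpos <| by
    rw [← inter_assoc]
    exact hci₁ y₂ 0 0 a₁ a₂ y₁ (hpos.trans_le (measure_mono inter_subset_left))
  have hY₁ := pcond_inter_eq_of_factorizes hpos₂ <|
    hci₂ y₁ 0 a₁ (hpos₂.trans_le (measure_mono inter_subset_left))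
  rw [← inter_assoc] at hY₂
  rw [hY₂, hY₁]

theorem sequential_factorization_recoverability
    {Ω 𝒴₁ 𝒴₂ 𝒜₁ 𝒜₂ : Type*} [MeasurableSpace Ω] [Fintype 𝒴₁] [Fintype 𝒴₂]
    [Fintype 𝒜₁] [Fintype 𝒜₂]
    (μ : Measure Ω) [IsProbabilityMeasure μ]
    (Y₁ : Ω → 𝒴₁) (Y₂ : Ω → 𝒴₂) (A₁ : Ω → 𝒜₁) (A₂ : Ω → 𝒜₂) (M₁ M₂ : Ω → Fin 2)
    -- (i) Y₂ ⫫ (M₁, M₂) | (A₁, A₂, Y₁)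
    (hci₁ : ∀ (y₂ : 𝒴₂) (m₁ m₂ : Fin 2) (a₁ : 𝒜₁) (a₂ : 𝒜₂) (y₁ : 𝒴₁),
      0 < μ ({ω | A₁ ω = a₁} ∩ {ω | A₂ ω = a₂} ∩ {ω | Y₁ ω = y₁}) →
      pcond μ ({ω | Y₂ ω = y₂} ∩ {ω | M₁ ω = m₁} ∩ {ω | M₂ ω = m₂})
          ({ω | A₁ ω = a₁} ∩ {ω | A₂ ω = a₂} ∩ {ω | Y₁ ω = y₁})
        = pcond μ {ω | Y₂ ω = y₂} ({ω | A₁ ω = a₁} ∩ {ω | A₂ ω = a₂} ∩ {ω | Y₁ ω = y₁})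
          * pcond μ ({ω | M₁ ω = m₁} ∩ {ω | M₂ ω = m₂})
              ({ω | A₁ ω = a₁} ∩ {ω | A₂ ω = a₂} ∩ {ω | Y₁ ω = y₁}))
    -- (ii) Y₁ ⫫ M₁ | A₁
    (hci₂ : ∀ (y₁ : 𝒴₁) (m₁ : Fin 2) (a₁ : 𝒜₁), 0 < μ {ω | A₁ ω = a₁} →
      pcond μ ({ω | Y₁ ω = y₁} ∩ {ω | M₁ ω = m₁}) {ω | A₁ ω = a₁}
        = pcond μ {ω | Y₁ ω = y₁} {ω | A₁ ω = a₁}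
          * pcond μ {ω | M₁ ω = m₁} {ω | A₁ ω = a₁})
    (y₂ : 𝒴₂) (a₁ : 𝒜₁) (a₂ : 𝒜₂)
    -- positivity of all conditioning events
    (hpos₁ : ∀ y₁ : 𝒴₁,
      0 < μ ({ω | A₁ ω = a₁} ∩ {ω | A₂ ω = a₂} ∩ {ω | Y₁ ω = y₁}
        ∩ {ω | M₁ ω = 0} ∩ {ω | M₂ ω = 0}))
    (hpos₂ : 0 < μ ({ω | A₁ ω = a₁} ∩ {ω | M₁ ω = 0})) :
    ∑ y₁ : 𝒴₁,
        pcond μ {ω | Y₂ ω = y₂} ({ω | A₁ ω = a₁} ∩ {ω | A₂ ω = a₂} ∩ {ω | Y₁ ω = y₁})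
          * pcond μ {ω | Y₁ ω = y₁} {ω | A₁ ω = a₁}
      = ∑ y₁ : 𝒴₁,
        pcond μ {ω | Y₂ ω = y₂}
            ({ω | A₁ ω = a₁} ∩ {ω | A₂ ω = a₂} ∩ {ω | Y₁ ω = y₁}
              ∩ {ω | M₁ ω = 0} ∩ {ω | M₂ ω = 0})
          * pcond μ {ω | Y₁ ω = y₁} ({ω | A₁ ω = a₁} ∩ {ω | M₁ ω = 0}) :=
  sequential_factorization_recoverability_general μ Y₁ Y₂ A₁ A₂ M₁ M₂ hci₁ hci₂ y₂ a₁ a₂ hpos₁ hpos₂
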